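/- If ν is a quasi-stationary distribution with absorption parameter θ_{0,S}, then j_S(ν) = 0 and ν{x : j_S(x) > 0} = 0. If in addition Assumption (A) holds and ν ∈ M₊(W_S), then ν(η_S) = 1 and ν = Σ_{i∈I_S} ν(η_{S,i}) ν_{S,i}. -/

import Mathlib

/-!
Quasi-stationarity with parameter `θ₀` means `ν S_n 𝟙 = θ₀ⁿ`, so by Fatou's lemma
`∫ liminf θ₀⁻ⁿ S_n 𝟙 dν ≤ 1` and `θ₀⁻ⁿ S_n 𝟙 (x)` has a finite liminf for `ν`-a.e. `x`; a finite
liminf kills every polynomial correction `n^{-l}`, so `j_S = 0` there (and `j_S(ν) = 0` for the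
same reason). Under (A), the approximation `θ₀⁻ⁿ S_n 𝟙_s (x) ≈ ∑ᵢ η_i(x) ν_i(s)` then holds
`ν`-a.e. without the factor `n^{-j_S(x)}`; integrating it against `ν`, quasi-stationarity turns
the left side into `ν(s)` exactly while the error is at most `α_n ν(W) → 0`.
-/

open MeasureTheory ProbabilityTheory Filter ENNReal

variable {α : Type*} [MeasurableSpace α]

noncomputable def kmass (S : ℕ → Kernel α α) (n : ℕ) (μ : Measure α) : ℝ≥0∞ :=
  Measure.bind μ (fun x => S n x) Set.univ

noncomputable def expParam (S : ℕ → Kernel α α) (μ : Measure α) : ℝ≥0∞ :=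
  sInf {θ : ℝ≥0∞ | Filter.liminf (fun n : ℕ => θ⁻¹ ^ n * kmass S n μ) Filter.atTop = 0}

noncomputable def theta0 (S : ℕ → Kernel α α) : ℝ≥0∞ :=
  ⨆ x : α, expParam S (Measure.dirac x)

noncomputable def polyParam (S : ℕ → Kernel α α) (μ : Measure α) : ℝ :=
  sInf {l : ℝ | 0 ≤ l ∧
    Filter.liminf (fun n : ℕ => (n : ℝ≥0∞) ^ (-l) * (theta0 S)⁻¹ ^ n * kmass S n μ)
      Filter.atTop = 0}

noncomputable def jfun (S : ℕ → Kernel α α) (x : α) : ℝ :=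
  polyParam S (Measure.dirac x)

def IsSubMarkovSemigroup (S : ℕ → Kernel α α) : Prop :=
  S 0 = Kernel.id ∧ (∀ n m, S (n + m) = (S m) ∘ₖ (S n)) ∧ ∀ n x, (S n) x Set.univ ≤ 1

/-- **Assumption (A)** of Champagnat–Villemonais. -/
structure AssumptionA (S : ℕ → Kernel α α) {I : Type} (W : α → ℝ)
    (ν : I → Measure α) (η : I → α → ℝ) (a : ℕ → ℝ) : Prop where
  countable : Countable I
  theta0_pos : 0 < theta0 S
  theta0_le_one : theta0 S ≤ 1
  j_nat : ∀ x : α, ∃ k : ℕ, jfun S x = (k : ℝ)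
  W_meas : Measurable W
  one_le_W : ∀ x, 1 ≤ W x
  nu_prob : ∀ i, IsProbabilityMeasure (ν i)
  nu_W : ∀ i, ∫⁻ x, ENNReal.ofReal (W x) ∂(ν i) ≠ ∞
  eta_meas : ∀ i, Measurable (η i)
  eta_nonneg : ∀ i x, 0 ≤ η i x
  eta_ne_zero : ∀ i, η i ≠ 0
  eta_bdd : ∀ i, ∃ C : ℝ, ∀ x, η i x ≤ C * W x
  summable_etanu : ∀ x, Summable (fun i => η i x * (∫⁻ y, ENNReal.ofReal (W y) ∂(ν i)).toReal)
  etanu_bdd : ∃ C : ℝ, ∀ x,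
    (∑' i, η i x * (∫⁻ y, ENNReal.ofReal (W y) ∂(ν i)).toReal) ≤ C * W x
  SW_fin : ∀ n x, ∫⁻ y, ENNReal.ofReal (W y) ∂(S n x) ≠ ∞
  a_nonneg : ∀ n, 0 ≤ a n
  a_tendsto : Tendsto a atTop (nhds 0)
  approx : ∀ f : α → ℝ, Measurable f → ∀ c : ℝ, 0 ≤ c → (∀ x, |f x| ≤ c * W x) →
    ∀ n : ℕ, 1 ≤ n → ∀ x : α,
      |((theta0 S).toReal)⁻¹ ^ n * (n : ℝ) ^ (-(jfun S x)) * (∫ y, f y ∂(S n x)) -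
        ∑' i, η i x * ∫ y, f y ∂(ν i)| ≤ a n * W x * c

def IsQSD (S : ℕ → Kernel α α) (ν : Measure α) : Prop :=
  IsProbabilityMeasure ν ∧ ∀ n, kmass S n ν ≠ 0 ∧
    Measure.bind ν (fun x => S n x) = kmass S n ν • ν

lemma kmass_eq_lintegral (S : ℕ → Kernel α α) (n : ℕ) (μ : Measure α) :
    kmass S n μ = ∫⁻ x, S n x Set.univ ∂μ :=
  Measure.bind_apply MeasurableSet.univ (Kernel.aemeasurable _)

lemma kmass_dirac (S : ℕ → Kernel α α) (n : ℕ) (x : α) :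
    kmass S n (Measure.dirac x) = S n x Set.univ := by
  rw [kmass, Measure.dirac_bind (Kernel.measurable _)]

lemma ENNReal.inv_pow_mul_pow_le_one (θ : ℝ≥0∞) (n : ℕ) : θ⁻¹ ^ n * θ ^ n ≤ 1 := by
  rw [← mul_pow]
  exact pow_le_one₀ bot_le (ENNReal.inv_mul_le_one θ)

lemma ENNReal.tendsto_natCast_rpow_neg_atTop {l : ℝ} (hl : 0 < l) :
    Tendsto (fun n : ℕ => (n : ℝ≥0∞) ^ (-l)) atTop (nhds 0) := by
  simpa [ENNReal.rpow_neg] using tendsto_inv_iff.2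
    ((ENNReal.tendsto_rpow_at_top hl).comp ENNReal.tendsto_nat_nhds_top)

lemma ENNReal.liminf_natCast_rpow_neg_mul_eq_zero {u : ℕ → ℝ≥0∞} (hu : liminf u atTop ≠ ∞)
    {l : ℝ} (hl : 0 < l) : liminf (fun n : ℕ => (n : ℝ≥0∞) ^ (-l) * u n) atTop = 0 := by
  have hlim := (ENNReal.tendsto_natCast_rpow_neg_atTop hl).limsup_eq
  refine le_antisymm ?_ bot_le
  calc liminf (fun n : ℕ => (n : ℝ≥0∞) ^ (-l) * u n) atTop
      ≤ limsup (fun n : ℕ => (n : ℝ≥0∞) ^ (-l)) atTop * liminf u atTop :=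
        ENNReal.liminf_mul_le (Or.inr hu) (Or.inl (hlim ▸ ENNReal.zero_ne_top))
    _ = 0 := by rw [hlim, zero_mul]

lemma polyParam_nonneg (S : ℕ → Kernel α α) (μ : Measure α) : 0 ≤ polyParam S μ :=
  Real.sInf_nonneg fun _ hl => hl.1

lemma polyParam_eq_zero_of_liminf_ne_top {S : ℕ → Kernel α α} {μ : Measure α}
    (h : liminf (fun n : ℕ => (theta0 S)⁻¹ ^ n * kmass S n μ) atTop ≠ ∞) :
    polyParam S μ = 0 := by
  refine le_antisymm (le_of_forall_gt_imp_ge_of_dense fun l hl => ?_) (polyParam_nonneg S μ)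
  refine csInf_le ⟨0, fun _ hm => hm.1⟩ ⟨hl.le, ?_⟩
  simpa only [mul_assoc] using ENNReal.liminf_natCast_rpow_neg_mul_eq_zero h hl

lemma inv_pow_mul_kmass_le_one {S : ℕ → Kernel α α} {μ : Measure α}
    (h : ∀ n, kmass S n μ ≤ theta0 S ^ n) (n : ℕ) : (theta0 S)⁻¹ ^ n * kmass S n μ ≤ 1 :=
  (mul_le_mul_right (h n) _).trans (ENNReal.inv_pow_mul_pow_le_one _ n)

lemma polyParam_eq_zero_of_kmass_le {S : ℕ → Kernel α α} {μ : Measure α}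
    (h : ∀ n, kmass S n μ ≤ theta0 S ^ n) : polyParam S μ = 0 :=
  polyParam_eq_zero_of_liminf_ne_top <| ne_top_of_le_ne_top ENNReal.one_ne_top <|
    liminf_le_of_frequently_le' (Frequently.of_forall (inv_pow_mul_kmass_le_one h))

lemma ae_jfun_eq_zero_of_kmass_le {S : ℕ → Kernel α α} {μ : Measure α}
    (h : ∀ n, kmass S n μ ≤ theta0 S ^ n) : ∀ᵐ x ∂μ, jfun S x = 0 := by
  set F : ℕ → α → ℝ≥0∞ := fun n x => (theta0 S)⁻¹ ^ n * S n x Set.univ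
  have hF : ∀ n, Measurable (F n) := fun n =>
    ((S n).measurable_coe MeasurableSet.univ).const_mul _
  have hfatou : ∫⁻ x, liminf (fun n => F n x) atTop ∂μ ≤ 1 := by
    refine (lintegral_liminf_le hF).trans (liminf_le_of_frequently_le' (Frequently.of_forall ?_))
    intro n
    rw [lintegral_const_mul _ ((S n).measurable_coe MeasurableSet.univ), ← kmass_eq_lintegral]
    exact inv_pow_mul_kmass_le_one h n
  filter_upwards [ae_lt_top (Measurable.liminf hF) (ne_top_of_le_ne_top one_ne_top hfatou)]
    with x hx
  refine polyParam_eq_zero_of_liminf_ne_top ?_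
  simpa only [kmass_dirac] using hx.ne

lemma eq_of_abs_sub_le_of_tendsto_zero {u v K : ℝ} {a : ℕ → ℝ} (ha : Tendsto a atTop (nhds 0))
    (h : ∀ᶠ n in atTop, |u - v| ≤ a n * K) : u = v := by
  have hlim : Tendsto (fun n => a n * K) atTop (nhds 0) := by simpa using ha.mul_const K
  exact sub_eq_zero.1 (abs_nonpos_iff.1 (ge_of_tendsto hlim h))

lemma ofReal_integral_tsum_of_nonneg {ι : Type*} [Countable ι] {μ : Measure α} {F : ι → α → ℝ}
    (hF : ∀ i, Integrable (F i) μ) (h0 : ∀ i x, 0 ≤ F i x) (hs : ∀ x, Summable fun i => F i x)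
    (hint : Integrable (fun x => ∑' i, F i x) μ) :
    ENNReal.ofReal (∫ x, ∑' i, F i x ∂μ) = ∑' i, ENNReal.ofReal (∫ x, F i x ∂μ) := by
  rw [ofReal_integral_eq_lintegral_ofReal hint (ae_of_all _ fun x => tsum_nonneg (h0 · x))]
  simp_rw [ofReal_tsum_of_nonneg (h0 · _) (hs _)]
  rw [lintegral_tsum fun i => (hF i).aemeasurable.ennreal_ofReal]
  exact tsum_congr fun i => (ofReal_integral_eq_lintegral_ofReal (hF i) (ae_of_all _ (h0 i))).symm

section BindEqSmul

variable {β : Type*} [MeasurableSpace β] {κ : Kernel α β} {μ : Measure α} {ρ : Measure β}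
  {c : ℝ≥0∞} {s : Set β}

lemma lintegral_kernel_apply_of_bind_eq_smul (h : μ.bind κ = c • ρ) (hs : MeasurableSet s) :
    ∫⁻ x, κ x s ∂μ = c * ρ s := by
  rw [← Measure.bind_apply hs κ.aemeasurable, h, Measure.smul_apply, smul_eq_mul]

lemma integrable_measureReal_kernel_of_bind_eq_smul [IsFiniteMeasure ρ] (hc : c ≠ ∞)
    (h : μ.bind κ = c • ρ) (hs : MeasurableSet s) : Integrable (fun x => (κ x).real s) μ :=
  integrable_toReal_of_lintegral_ne_top (κ.measurable_coe hs).aemeasurable <| by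
    rw [lintegral_kernel_apply_of_bind_eq_smul h hs]
    exact mul_ne_top hc (measure_ne_top ρ s)

lemma integral_measureReal_kernel_of_bind_eq_smul [IsFiniteMeasure ρ] (hc : c ≠ ∞)
    (h : μ.bind κ = c • ρ) (hs : MeasurableSet s) : ∫ x, (κ x).real s ∂μ = c.toReal * ρ.real s := by
  have hfin : ∫⁻ x, κ x s ∂μ ≠ ∞ := by
    rw [lintegral_kernel_apply_of_bind_eq_smul h hs]
    exact mul_ne_top hc (measure_ne_top ρ s)
  simp only [measureReal_def]
  rw [integral_toReal (κ.measurable_coe hs).aemeasurable (ae_lt_top (κ.measurable_coe hs) hfin),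
    lintegral_kernel_apply_of_bind_eq_smul h hs, toReal_mul]

end BindEqSmul

namespace AssumptionA

variable {S : ℕ → Kernel α α} {I : Type} {W : α → ℝ} {ν : I → Measure α} {η : I → α → ℝ}
  {a : ℕ → ℝ} {μ : Measure α}

lemma theta0_ne_top (hA : AssumptionA S W ν η a) : theta0 S ≠ ∞ :=
  ne_top_of_le_ne_top one_ne_top hA.theta0_le_one

lemma integrable_W (hA : AssumptionA S W ν η a) (hμW : ∫⁻ x, ENNReal.ofReal (W x) ∂μ ≠ ∞) :
    Integrable W μ :=
  (integrable_toReal_of_lintegral_ne_top hA.W_meas.ennreal_ofReal.aemeasurable hμW).congr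
    (ae_of_all _ fun x => toReal_ofReal (zero_le_one.trans (hA.one_le_W x)))

lemma integrable_of_le_mul_W (hA : AssumptionA S W ν η a)
    (hμW : ∫⁻ x, ENNReal.ofReal (W x) ∂μ ≠ ∞) {f : α → ℝ} (hf : Measurable f) (hf0 : ∀ x, 0 ≤ f x)
    {C : ℝ} (hC : ∀ x, f x ≤ C * W x) : Integrable f μ :=
  ((hA.integrable_W hμW).const_mul C).mono' hf.aestronglyMeasurable <|
    ae_of_all _ fun x => by rw [Real.norm_of_nonneg (hf0 x)]; exact hC x

lemma integrable_eta (hA : AssumptionA S W ν η a) (hμW : ∫⁻ x, ENNReal.ofReal (W x) ∂μ ≠ ∞)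
    (i : I) : Integrable (η i) μ :=
  have ⟨_, hC⟩ := hA.eta_bdd i
  hA.integrable_of_le_mul_W hμW (hA.eta_meas i) (hA.eta_nonneg i) hC

lemma measureReal_le_toReal_lintegral_W (hA : AssumptionA S W ν η a) (i : I) (s : Set α) :
    (ν i).real s ≤ (∫⁻ x, ENNReal.ofReal (W x) ∂ν i).toReal := by
  have := hA.nu_prob i
  refine toReal_mono (hA.nu_W i) ?_
  calc ν i s ≤ ν i Set.univ := measure_mono (Set.subset_univ s)
    _ = ∫⁻ _, 1 ∂ν i := lintegral_one.symm
    _ ≤ ∫⁻ x, ENNReal.ofReal (W x) ∂ν i :=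
      lintegral_mono fun x => ENNReal.one_le_ofReal.2 (hA.one_le_W x)

lemma summable_eta_mul_measureReal (hA : AssumptionA S W ν η a) (s : Set α) (x : α) :
    Summable fun i => η i x * (ν i).real s :=
  (hA.summable_etanu x).of_nonneg_of_le
    (fun i => mul_nonneg (hA.eta_nonneg i x) measureReal_nonneg)
    fun i => mul_le_mul_of_nonneg_left (hA.measureReal_le_toReal_lintegral_W i s)
      (hA.eta_nonneg i x)

lemma integrable_tsum_eta_mul_measureReal (hA : AssumptionA S W ν η a)
    (hμW : ∫⁻ x, ENNReal.ofReal (W x) ∂μ ≠ ∞) (s : Set α) :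
    Integrable (fun x => ∑' i, η i x * (ν i).real s) μ := by
  have := hA.countable
  obtain ⟨C, hC⟩ := hA.etanu_bdd
  refine hA.integrable_of_le_mul_W hμW (Measurable.tsum fun i => (hA.eta_meas i).mul_const _)
    (fun x => tsum_nonneg fun i => mul_nonneg (hA.eta_nonneg i x) measureReal_nonneg)
    fun x => le_trans ?_ (hC x)
  exact (hA.summable_eta_mul_measureReal s x).tsum_le_tsum
    (fun i => mul_le_mul_of_nonneg_left (hA.measureReal_le_toReal_lintegral_W i s)
      (hA.eta_nonneg i x)) (hA.summable_etanu x)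

lemma abs_inv_pow_mul_measureReal_sub_tsum_le (hA : AssumptionA S W ν η a) {s : Set α}
    (hs : MeasurableSet s) {n : ℕ} (hn : 1 ≤ n) {x : α} (hx : jfun S x = 0) :
    |(theta0 S).toReal⁻¹ ^ n * (S n x).real s - ∑' i, η i x * (ν i).real s| ≤ a n * W x := by
  have h := hA.approx (s.indicator 1) (measurable_const.indicator hs) 1 zero_le_one
    (fun y => by
      rw [one_mul]
      refine le_trans ?_ (hA.one_le_W y)
      by_cases hy : y ∈ s <;> simp [hy]) n hn x
  simpa only [integral_indicator_one hs, hx, neg_zero, Real.rpow_zero, mul_one] using h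

theorem measureReal_eq_integral_tsum_eta_mul (hA : AssumptionA S W ν η a) [IsFiniteMeasure μ]
    (hμW : ∫⁻ x, ENNReal.ofReal (W x) ∂μ ≠ ∞) (hbind : ∀ n, μ.bind (S n) = theta0 S ^ n • μ)
    (hj : ∀ᵐ x ∂μ, jfun S x = 0) {s : Set α} (hs : MeasurableSet s) :
    μ.real s = ∫ x, ∑' i, η i x * (ν i).real s ∂μ := by
  have hθ : 0 < (theta0 S).toReal := toReal_pos hA.theta0_pos.ne' hA.theta0_ne_top
  have hG := hA.integrable_tsum_eta_mul_measureReal hμW s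
  refine eq_of_abs_sub_le_of_tendsto_zero (K := ∫ x, W x ∂μ) hA.a_tendsto
    (eventually_atTop.2 ⟨1, fun n hn => ?_⟩)
  have hc : theta0 S ^ n ≠ ∞ := pow_ne_top hA.theta0_ne_top
  set H : α → ℝ := fun x => (theta0 S).toReal⁻¹ ^ n * (S n x).real s
  have hH : Integrable H μ :=
    (integrable_measureReal_kernel_of_bind_eq_smul hc (hbind n) hs).const_mul _
  have hHμ : ∫ x, H x ∂μ = μ.real s := by
    rw [integral_const_mul, integral_measureReal_kernel_of_bind_eq_smul hc (hbind n) hs,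
      toReal_pow, ← mul_assoc, ← mul_pow, inv_mul_cancel₀ hθ.ne', one_pow, one_mul]
  calc |μ.real s - ∫ x, ∑' i, η i x * (ν i).real s ∂μ|
      = |∫ x, (H x - ∑' i, η i x * (ν i).real s) ∂μ| := by rw [integral_sub hH hG, hHμ]
    _ ≤ ∫ x, |H x - ∑' i, η i x * (ν i).real s| ∂μ := abs_integral_le_integral_abs
    _ ≤ ∫ x, a n * W x ∂μ :=
      integral_mono_ae (hH.sub hG).abs ((hA.integrable_W hμW).const_mul _)
        (hj.mono fun x hx => hA.abs_inv_pow_mul_measureReal_sub_tsum_le hs hn hx)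
    _ = a n * ∫ x, W x ∂μ := integral_const_mul _ _

theorem eq_sum_smul_of_bind_eq_smul (hA : AssumptionA S W ν η a) [IsFiniteMeasure μ]
    (hμW : ∫⁻ x, ENNReal.ofReal (W x) ∂μ ≠ ∞) (hbind : ∀ n, μ.bind (S n) = theta0 S ^ n • μ)
    (hj : ∀ᵐ x ∂μ, jfun S x = 0) :
    μ = Measure.sum fun i => ENNReal.ofReal (∫ x, η i x ∂μ) • ν i := by
  have := hA.countable
  ext s hs
  rw [Measure.sum_apply _ hs, ← ofReal_measureReal,
    hA.measureReal_eq_integral_tsum_eta_mul hμW hbind hj hs,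
    ofReal_integral_tsum_of_nonneg (fun i => (hA.integrable_eta hμW i).mul_const _)
      (fun i x => mul_nonneg (hA.eta_nonneg i x) measureReal_nonneg)
      (hA.summable_eta_mul_measureReal s) (hA.integrable_tsum_eta_mul_measureReal hμW s)]
  refine tsum_congr fun i => ?_
  have := hA.nu_prob i
  rw [integral_mul_const, ofReal_mul (integral_nonneg (hA.eta_nonneg i)), ofReal_measureReal,
    Measure.smul_apply, smul_eq_mul]

end AssumptionA

theorem qsd_with_param_theta0_structure_general
    (S : ℕ → Kernel α α)
    (νq : Measure α) (hq : IsQSD S νq)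
    (habs : ∀ n : ℕ, kmass S n νq = theta0 S ^ n) :
    (polyParam S νq = 0 ∧ νq {x | 0 < jfun S x} = 0) ∧
    (∀ {I : Type} {W : α → ℝ} {ν : I → Measure α} {η : I → α → ℝ} {a : ℕ → ℝ},
      AssumptionA S W ν η a → (∫⁻ x, ENNReal.ofReal (W x) ∂νq) ≠ ∞ →
      (∫ x, (∑' i, η i x) ∂νq = 1 ∧
        νq = Measure.sum (fun i => ENNReal.ofReal (∫ x, η i x ∂νq) • ν i))) := by
  obtain ⟨hprob, hqsd⟩ := hq
  have hj : ∀ᵐ x ∂νq, jfun S x = 0 := ae_jfun_eq_zero_of_kmass_le fun n => (habs n).le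
  have hbind : ∀ n, νq.bind (S n) = theta0 S ^ n • νq := fun n => habs n ▸ (hqsd n).2
  refine ⟨⟨polyParam_eq_zero_of_kmass_le fun n => (habs n).le,
    measure_mono_null (fun x (hx : 0 < jfun S x) => hx.ne') (ae_iff.1 hj)⟩,
    fun hA hW => ⟨?_, hA.eq_sum_smul_of_bind_eq_smul hW hbind hj⟩⟩
  have := hA.nu_prob
  simpa using (hA.measureReal_eq_integral_tsum_eta_mul hW hbind hj MeasurableSet.univ).symm

/-- If `ν` is a quasi-stationary distribution with absorption parameter
`θ_{0,S}`, then `j_S(ν) = 0` and `ν{x : j_S(x) > 0} = 0`.  If in addition Assumption (A)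
holds and `ν ∈ M₊(W_S)`, then `ν(η_S) = 1` and `ν = Σ_{i ∈ I_S} ν(η_{S,i}) ν_{S,i}`. -/
theorem qsd_with_param_theta0_structure
    (S : ℕ → Kernel α α) (hS : IsSubMarkovSemigroup S)
    (νq : Measure α) (hq : IsQSD S νq)
    (habs : ∀ n : ℕ, kmass S n νq = theta0 S ^ n) :
    (polyParam S νq = 0 ∧ νq {x | 0 < jfun S x} = 0) ∧
    (∀ {I : Type} {W : α → ℝ} {ν : I → Measure α} {η : I → α → ℝ} {a : ℕ → ℝ},
      AssumptionA S W ν η a → (∫⁻ x, ENNReal.ofReal (W x) ∂νq) ≠ ∞ →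
      (∫ x, (∑' i, η i x) ∂νq = 1 ∧
        νq = Measure.sum (fun i => ENNReal.ofReal (∫ x, η i x ∂νq) • ν i))) :=
  qsd_with_param_theta0_structure_general S νq hq habs
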